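/- Let f : [0,∞) → ℝ be measurable of exponential order k and let F(ξ) be its bicomplex Laplace transform on the region D = {ξ₁e₁ + ξ₂e₂ : Re ξ₁ > k, Re ξ₂ > k}. Then F(ξ) → 0 as Re(ξ₁) → ∞ and Re(ξ₂) → ∞; more precisely, ‖F(ξ₁e₁+ξ₂e₂)‖ ≤ M(1/(Re ξ₁ - k) + 1/(Re ξ₂ - k)) whenever |f(t)| ≤ Me^{kt}. -/

import Mathlib

open MeasureTheory Set

noncomputable section

/-- Bicomplex numbers, modeled in idempotent coordinates as pairs `(ξ₁, ξ₂)` of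
complex numbers (multiplication on `ℂ × ℂ` is componentwise, which is exactly
bicomplex multiplication in idempotent coordinates). -/
abbrev C2 := ℂ × ℂ

namespace C2

/-- The imaginary unit `i₁` of the bicomplex numbers. -/
def i1 : C2 := (Complex.I, Complex.I)

/-- The imaginary unit `i₂` of the bicomplex numbers. -/
def i2 : C2 := (-Complex.I, Complex.I)

/-- The idempotent `e₁ = (1 + i₁i₂)/2`. -/
def e1 : C2 := (1 + i1 * i2) / 2

/-- The idempotent `e₂ = (1 - i₁i₂)/2`. -/
def e2 : C2 := (1 - i1 * i2) / 2

/-- Embedding of `ℂ` (the `i₁`-copy of the complex numbers) into `C2`. -/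
def oc (z : ℂ) : C2 := (z, z)

/-- The bicomplex number `z₁ + i₂ z₂`. -/
def bmk (z₁ z₂ : ℂ) : C2 := oc z₁ + oc z₂ * i2

/-- First idempotent projection. -/
def P1 (ξ : C2) : ℂ := ξ.1

/-- Second idempotent projection. -/
def P2 (ξ : C2) : ℂ := ξ.2

/-- First cartesian component: `z₁` in `ξ = z₁ + i₂ z₂`. -/
def z1 (ξ : C2) : ℂ := (ξ.1 + ξ.2) / 2

/-- Second cartesian component: `z₂` in `ξ = z₁ + i₂ z₂`. -/
def z2 (ξ : C2) : ℂ := Complex.I * (ξ.1 - ξ.2) / 2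

/-- The bicomplex (Euclidean) norm `‖z₁ + i₂ z₂‖ = √(|z₁|² + |z₂|²)`. -/
def bnorm (ξ : C2) : ℝ := Real.sqrt (‖z1 ξ‖ ^ 2 + ‖z2 ξ‖ ^ 2)

/-- The bicomplex exponential (computed via idempotent components). -/
def bexp (ξ : C2) : C2 := (Complex.exp ξ.1, Complex.exp ξ.2)

/-- The bicomplex Laplace transform `F(ξ) = ∫₀^∞ f(t) e^{-ξt} dt`. -/
def laplace (f : ℝ → ℝ) (ξ : C2) : C2 := ∫ t in Set.Ici (0 : ℝ), f t • bexp (-(t • ξ))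

end C2

open C2

/-!
In idempotent coordinates the bicomplex transform at `ξ₁e₁ + ξ₂e₂` is the pair of complex Laplace
transforms `(F₁, F₂)` at `ξ₁` and `ξ₂`. Domination of the integrand by `M e^{(k - Re ξᵢ)t}` gives
`|Fᵢ| ≤ M / (Re ξᵢ - k)`, and by the parallelogram law the bicomplex norm of `(F₁, F₂)` is
`√((|F₁|² + |F₂|²)/2) ≤ |F₁| + |F₂|`.
-/

def complexLaplace (f : ℝ → ℝ) (ξ : ℂ) : ℂ := ∫ t in Ici (0 : ℝ), f t • Complex.exp (-(t • ξ))

section ExponentialOrder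

variable {f : ℝ → ℝ} {k M : ℝ} {ξ : ℂ}

lemma norm_smul_cexp_neg_le (hord : ∀ t ≥ 0, |f t| ≤ M * Real.exp (k * t)) {t : ℝ}
    (ht : 0 ≤ t) : ‖f t • Complex.exp (-(t • ξ))‖ ≤ M * Real.exp ((k - ξ.re) * t) := by
  rw [norm_smul, Complex.norm_exp, Real.norm_eq_abs]
  calc |f t| * Real.exp (-(t • ξ)).re
      ≤ M * Real.exp (k * t) * Real.exp (-(t * ξ.re)) := by
        simp only [Complex.neg_re, Complex.smul_re, smul_eq_mul]
        gcongr
        exact hord t ht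
    _ = M * Real.exp ((k - ξ.re) * t) := by rw [mul_assoc, ← Real.exp_add]; ring_nf

lemma integrableOn_const_mul_exp_mul_Ioi (hk : k < ξ.re) :
    IntegrableOn (fun t => M * Real.exp ((k - ξ.re) * t)) (Ioi 0) :=
  (integrableOn_exp_mul_Ioi (by linarith) 0).const_mul M

lemma integrableOn_laplace_integrand (hf : Measurable f)
    (hord : ∀ t ≥ 0, |f t| ≤ M * Real.exp (k * t)) (hk : k < ξ.re) :
    IntegrableOn (fun t => f t • Complex.exp (-(t • ξ))) (Ici 0) := by
  rw [integrableOn_Ici_iff_integrableOn_Ioi]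
  refine (integrableOn_const_mul_exp_mul_Ioi (M := M) hk).mono' (by fun_prop) ?_
  filter_upwards [ae_restrict_mem measurableSet_Ioi] with t ht
  exact norm_smul_cexp_neg_le hord ht.le

lemma norm_complexLaplace_le (hord : ∀ t ≥ 0, |f t| ≤ M * Real.exp (k * t)) (hk : k < ξ.re) :
    ‖complexLaplace f ξ‖ ≤ M / (ξ.re - k) := by
  rw [complexLaplace, integral_Ici_eq_integral_Ioi]
  calc ‖∫ t in Ioi 0, f t • Complex.exp (-(t • ξ))‖
      ≤ ∫ t in Ioi 0, M * Real.exp ((k - ξ.re) * t) := by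
        refine norm_integral_le_of_norm_le (integrableOn_const_mul_exp_mul_Ioi hk) ?_
        filter_upwards [ae_restrict_mem measurableSet_Ioi] with t ht
        exact norm_smul_cexp_neg_le hord ht.le
    _ = M / (ξ.re - k) := by
        rw [integral_const_mul, integral_exp_mul_Ioi (by linarith), mul_zero, Real.exp_zero,
          ← neg_sub ξ.re k, div_neg, neg_div, neg_neg, mul_one_div]

end ExponentialOrder

namespace C2

lemma oc_mul_e1_add_oc_mul_e2 (ξ₁ ξ₂ : ℂ) : oc ξ₁ * e1 + oc ξ₂ * e2 = (ξ₁, ξ₂) := by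
  ext <;> simp [oc, e1, e2, i1, i2]

lemma bnorm_eq (ξ : C2) : bnorm ξ = √((‖ξ.1‖ ^ 2 + ‖ξ.2‖ ^ 2) / 2) := by
  have := parallelogram_law_with_norm ℝ ξ.1 ξ.2
  rw [bnorm, z1, z2]
  congr 1
  simp only [norm_div, norm_mul, Complex.norm_I, Complex.norm_two, one_mul]
  linear_combination this / 4

lemma bnorm_le_norm_fst_add_norm_snd (ξ : C2) : bnorm ξ ≤ ‖ξ.1‖ + ‖ξ.2‖ := by
  rw [bnorm_eq]
  refine Real.sqrt_le_iff.mpr ⟨by positivity, ?_⟩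
  nlinarith [norm_nonneg ξ.1, norm_nonneg ξ.2]

lemma laplace_eq_complexLaplace {f : ℝ → ℝ} {ξ : C2}
    (h₁ : IntegrableOn (fun t => f t • Complex.exp (-(t • ξ.1))) (Ici 0))
    (h₂ : IntegrableOn (fun t => f t • Complex.exp (-(t • ξ.2))) (Ici 0)) :
    laplace f ξ = (complexLaplace f ξ.1, complexLaplace f ξ.2) :=
  integral_pair h₁ h₂

end C2

theorem stmt12_general (f : ℝ → ℝ) (k M : ℝ) (hf : Measurable f)
    (hord : ∀ t ≥ 0, |f t| ≤ M * Real.exp (k * t))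
    (ξ₁ ξ₂ : ℂ) (h1 : k < ξ₁.re) (h2 : k < ξ₂.re) :
    bnorm (laplace f (oc ξ₁ * e1 + oc ξ₂ * e2)) ≤
      M * (1 / (ξ₁.re - k) + 1 / (ξ₂.re - k)) := by
  rw [oc_mul_e1_add_oc_mul_e2, laplace_eq_complexLaplace (integrableOn_laplace_integrand hf hord h1)
    (integrableOn_laplace_integrand hf hord h2)]
  calc bnorm (complexLaplace f ξ₁, complexLaplace f ξ₂)
      ≤ ‖complexLaplace f ξ₁‖ + ‖complexLaplace f ξ₂‖ := bnorm_le_norm_fst_add_norm_snd _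
    _ ≤ M / (ξ₁.re - k) + M / (ξ₂.re - k) :=
        add_le_add (norm_complexLaplace_le hord h1) (norm_complexLaplace_le hord h2)
    _ = M * (1 / (ξ₁.re - k) + 1 / (ξ₂.re - k)) := by ring

theorem stmt12 (f : ℝ → ℝ) (k M : ℝ) (hf : Measurable f) (hM : 0 < M)
    (hord : ∀ t ≥ 0, |f t| ≤ M * Real.exp (k * t))
    (ξ₁ ξ₂ : ℂ) (h1 : k < ξ₁.re) (h2 : k < ξ₂.re) :
    bnorm (laplace f (oc ξ₁ * e1 + oc ξ₂ * e2)) ≤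
      M * (1 / (ξ₁.re - k) + 1 / (ξ₂.re - k)) :=
  stmt12_general f k M hf hord ξ₁ ξ₂ h1 h2
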